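/- arXiv:2511.21175 — 12 statements merged into one kernel-verified Lean document; each statement's English description precedes it below -/
import Mathlib

section
/- Let G be a group and let N be a minimal normal subgroup of G (that is, N is a non-trivial normal subgroup of G and every normal subgroup of G properly contained in N is trivial). Then N is contained in the pseudocentre P(G). -/
/-- The pseudocentre of a group `G`: the intersection of the normal closures of the
centralizers of the elements of `G`. -/
def P (G : Type*) [Group G] : Subgroup G :=
  ⨅ g : G, Subgroup.normalClosure ↑(Subgroup.centralizer {g})

/-- Every minimal normal subgroup of a group is contained in the pseudocentre. -/
theorem minimal_normal_le_pseudocentre {G : Type*} [Group G] (N : Subgroup G)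
    (hN : N.Normal) (hbot : N ≠ ⊥)
    (hmin : ∀ M : Subgroup G, M.Normal → M < N → M = ⊥) :
    N ≤ P G := by
  refine le_iInf fun g => ?_
  set K := Subgroup.normalClosure (↑(Subgroup.centralizer {g}) : Set G) with hKdef
  have hKn : K.Normal := Subgroup.normalClosure_normal
  by_cases h : N ⊓ K = N
  · exact inf_eq_left.mp h
  · exfalso
    have hlt : N ⊓ K < N := lt_of_le_of_ne inf_le_left h
    have hMn : (N ⊓ K).Normal := have := hN; have := hKn; Subgroup.normal_inf_normal N K
    have hbot' : N ⊓ K = ⊥ := hmin _ hMn hlt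
    apply hbot
    rw [eq_bot_iff]
    intro n hn
    have hg : g ∈ K := Subgroup.subset_normalClosure
      (by simp [Subgroup.mem_centralizer_iff])
    have hc : n * g * n⁻¹ * g⁻¹ ∈ N ⊓ K := by
      refine Subgroup.mem_inf.mpr ⟨?_, ?_⟩
      · have := mul_mem hn (hN.conj_mem n⁻¹ (inv_mem hn) g)
        simpa [mul_assoc] using this
      · exact mul_mem (hKn.conj_mem g hg n) (inv_mem hg)
    rw [hbot', Subgroup.mem_bot] at hc
    have hcomm : n * g = g * n := by
      calc n * g = (n * g * n⁻¹ * g⁻¹) * (g * n) := by group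
        _ = g * n := by rw [hc]; group
    have hnK : n ∈ K := Subgroup.subset_normalClosure
      (by simp [Subgroup.mem_centralizer_iff, hcomm.symm])
    have : n ∈ N ⊓ K := ⟨hn, hnK⟩
    rw [hbot'] at this
    exact this
end

section
/- For any groups H and K, the pseudocentre of the direct product H × K equals the direct product of the pseudocentres: P(H × K) = P(H) × P(K) (as subgroups of H × K, i.e. P(H × K) = (P(H)).prod (P(K)) under the identification of subgroups of a product). -/
lemma centralizer_prod {H K : Type*} [Group H] [Group K] (h : H) (k : K) :
    Subgroup.centralizer {(h, k)} =
      (Subgroup.centralizer {h}).prod (Subgroup.centralizer {k}) := by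
  ext ⟨x, y⟩
  simp only [Subgroup.mem_centralizer_iff, Set.mem_singleton_iff, Subgroup.mem_prod,
    forall_eq, Prod.ext_iff, Prod.mk_mul_mk, Prod.fst_mul, Prod.snd_mul]
  constructor
  · intro hc
    exact (hc (h, k) ⟨rfl, rfl⟩)
  · rintro ⟨h1, h2⟩ g ⟨hg1, hg2⟩
    exact ⟨hg1 ▸ h1, hg2 ▸ h2⟩

lemma normalClosure_prod {H K : Type*} [Group H] [Group K] (A : Subgroup H) (B : Subgroup K) :
    Subgroup.normalClosure ((A.prod B : Subgroup (H × K)) : Set (H × K)) =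
      (Subgroup.normalClosure ↑A).prod (Subgroup.normalClosure ↑B) := by
  apply le_antisymm
  · apply Subgroup.normalClosure_le_normal
    rintro ⟨x, y⟩ ⟨hx, hy⟩
    exact ⟨Subgroup.subset_normalClosure hx, Subgroup.subset_normalClosure hy⟩
  · rw [Subgroup.prod_le_iff]
    constructor
    · rw [Subgroup.map_le_iff_le_comap]
      haveI : ((Subgroup.normalClosure ↑(A.prod B)).comap
          (MonoidHom.inl H K)).Normal :=
        Subgroup.Normal.comap inferInstance _
      apply Subgroup.normalClosure_le_normal
      intro a ha
      exact Subgroup.subset_normalClosure (⟨ha, B.one_mem⟩ : ((a,1) : H × K) ∈ A.prod B)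
    · rw [Subgroup.map_le_iff_le_comap]
      haveI : ((Subgroup.normalClosure ↑(A.prod B)).comap
          (MonoidHom.inr H K)).Normal :=
        Subgroup.Normal.comap inferInstance _
      apply Subgroup.normalClosure_le_normal
      intro b hb
      exact Subgroup.subset_normalClosure (⟨A.one_mem, hb⟩ : ((1,b) : H × K) ∈ A.prod B)

/-- The pseudocentre of a direct product is the product of the pseudocentres. -/
theorem pseudocentre_prod (H K : Type*) [Group H] [Group K] :
    P (H × K) = (P H).prod (P K) := by
  ext ⟨x, y⟩
  simp only [P, Subgroup.mem_iInf, Subgroup.mem_prod, Prod.forall]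
  constructor
  · intro h
    constructor
    · intro g
      have := h g 1
      rw [centralizer_prod, normalClosure_prod] at this
      exact this.1
    · intro g
      have := h 1 g
      rw [centralizer_prod, normalClosure_prod] at this
      exact this.2
  · rintro ⟨h1, h2⟩ a b
    rw [centralizer_prod, normalClosure_prod]
    exact ⟨h1 a, h2 b⟩
end

section
/- Let α be a finite type with at least 3 elements. Then the pseudocentre of the symmetric group on α is the alternating group: P(Equiv.Perm α) = alternatingGroup α. -/
open Finset Subgroup

namespace Equiv.Perm

variable {α : Type*} [Fintype α] [DecidableEq α]

theorem alternatingGroup_le_of_isThreeCycle_mem {N : Subgroup (Perm α)} [hN : N.Normal]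
    {σ : Perm α} (hσ : σ.IsThreeCycle) (hσN : σ ∈ N) : alternatingGroup α ≤ N := by
  rw [← closure_three_cycles_eq_alternating, closure_le]
  intro τ hτ
  obtain ⟨π, rfl⟩ := isConj_iff.mp (isConj_iff_cycleType_eq.mpr (hσ.trans hτ.symm))
  exact hN.conj_mem σ hσN π

theorem exists_isThreeCycle_mem_of_swap_mem (h3 : 3 ≤ Fintype.card α) {N : Subgroup (Perm α)}
    [hN : N.Normal] {x y : α} (hxy : x ≠ y) (hxyN : swap x y ∈ N) :
    ∃ σ : Perm α, σ.IsThreeCycle ∧ σ ∈ N := by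
  obtain ⟨z, -, hz⟩ := exists_mem_notMem_of_card_lt_card (s := {x, y}) (t := univ)
    ((card_le_two).trans_lt (by rwa [card_univ]))
  rw [mem_insert, mem_singleton, not_or] at hz
  refine ⟨swap x y * swap x z, isThreeCycle_swap_mul_swap_same hxy (Ne.symm hz.1) (Ne.symm hz.2),
    mul_mem hxyN ?_⟩
  rw [swap_comm, ← swap_mul_swap_mul_swap hxy (Ne.symm hz.1), ← swap_inv y z]
  exact hN.conj_mem _ hxyN _

theorem exists_isThreeCycle_mem_of_isCycle_mem_of_three_le_card_support
    {N : Subgroup (Perm α)} [hN : N.Normal] {c : Perm α} (hc : c.IsCycle)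
    (h3 : 3 ≤ #c.support) (hcN : c ∈ N) :
    ∃ σ : Perm α, σ.IsThreeCycle ∧ σ ∈ N := by
  obtain ⟨a, ha⟩ := hc.nonempty_support
  have hca : c a ≠ a := mem_support.mp ha
  have hcca : c (c a) ≠ c a := fun h ↦ hca (c.injective h)
  have hc2a : c (c a) ≠ a := by
    intro h
    have hsq : c ^ 2 = 1 := (hc.pow_eq_one_iff' hca).mpr (by rwa [sq, mul_apply])
    have := Nat.le_of_dvd two_pos (orderOf_dvd_of_pow_eq_one hsq)
    rw [hc.orderOf] at this
    omega
  refine ⟨swap (c a) (c (c a)) * swap (c a) a,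
    isThreeCycle_swap_mul_swap_same hcca.symm hca hc2a, ?_⟩
  have hcomm : swap (c a) (c (c a)) * swap (c a) a =
      c * (swap a (c a) * c⁻¹ * (swap a (c a))⁻¹) := by
    rw [swap_apply_apply, swap_inv, swap_comm (c a) a]
    group
  rw [hcomm]
  exact mul_mem hcN (hN.conj_mem _ (inv_mem hcN) _)

theorem exists_isThreeCycle_mem_of_isCycle_mem (h3 : 3 ≤ Fintype.card α)
    {N : Subgroup (Perm α)} [N.Normal] {c : Perm α} (hc : c.IsCycle) (hcN : c ∈ N) :
    ∃ σ : Perm α, σ.IsThreeCycle ∧ σ ∈ N := by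
  rcases hc.two_le_card_support.eq_or_lt with h2 | h3'
  · obtain ⟨x, y, hxy, rfl⟩ := card_support_eq_two.mp h2.symm
    exact exists_isThreeCycle_mem_of_swap_mem h3 hxy hcN
  · exact exists_isThreeCycle_mem_of_isCycle_mem_of_three_le_card_support hc h3' hcN

theorem alternatingGroup_le_normalClosure_centralizer (h3 : 3 ≤ Fintype.card α) (g : Perm α) :
    alternatingGroup α ≤ normalClosure (centralizer {g} : Set (Perm α)) := by
  obtain rfl | ⟨a, ha⟩ := eq_or_ne g 1 |>.imp_right fun hg ↦ not_forall.mp (mt Equiv.ext hg)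
  · exact fun σ _ ↦ subset_normalClosure (mem_centralizer_singleton_iff.mpr (by simp))
  have hcN : g.cycleOf a ∈ normalClosure (centralizer {g} : Set (Perm α)) :=
    subset_normalClosure <| mem_centralizer_singleton_iff.mpr
      (self_mem_cycle_factors_commute (cycleOf_mem_cycleFactorsFinset_iff.mpr
        (mem_support.mpr ha))).eq
  obtain ⟨σ, hσ, hσN⟩ := exists_isThreeCycle_mem_of_isCycle_mem h3 (isCycle_cycleOf g ha) hcN
  exact alternatingGroup_le_of_isThreeCycle_mem hσ hσN

theorem centralizer_le_alternatingGroup {c : Perm α} (hc : c.IsCycle) (hodd : Odd #c.support)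
    (hfix : #c.supportᶜ ≤ 1) : centralizer {c} ≤ alternatingGroup α := by
  intro q hq
  obtain ⟨hqc, k, hk⟩ := hc.commute_iff.mp (mem_centralizer_singleton_iff.mp hq)
  -- `q` fixes the at most one point outside the support of `c`
  have hq_eq : ofSubtype (q.subtypePerm hqc) = q := by
    refine ofSubtype_subtypePerm hqc fun x hqx ↦ ?_
    by_contra hx
    exact hqx (card_le_one.mp hfix _ (mem_compl.mpr (mt (hqc x).mp hx)) _ (mem_compl.mpr hx))
  rw [mem_alternatingGroup, ← hq_eq, ← hk, map_zpow, hc.sign, hodd.neg_one_pow, neg_neg,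
    one_zpow]

theorem exists_isCycle_odd_card_support (h3 : 3 ≤ Fintype.card α) :
    ∃ c : Perm α, c.IsCycle ∧ Odd #c.support ∧ #c.supportᶜ ≤ 1 := by
  obtain ⟨n, hn3, hnodd, hn⟩ :
      ∃ n, 3 ≤ n ∧ Odd n ∧ n ≤ Fintype.card α ∧ Fintype.card α ≤ n + 1 := by
    rcases Nat.even_or_odd (Fintype.card α) with ⟨k, hk⟩ | hodd
    · exact ⟨Fintype.card α - 1, by omega, ⟨k - 1, by omega⟩, by omega, by omega⟩
    · exact ⟨Fintype.card α, h3, hodd, le_rfl, by omega⟩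
  obtain ⟨s, -, rfl⟩ := exists_subset_card_eq (s := (univ : Finset α)) (by simpa using hn.1)
  have hsupp : s.toList.formPerm.support = s := by
    rw [List.support_formPerm_of_nodup _ s.nodup_toList, toList_toFinset]
    rintro x hx
    simp [← Finset.length_toList, hx] at hn3
  refine ⟨s.toList.formPerm,
    List.isCycle_formPerm s.nodup_toList (by rw [Finset.length_toList]; omega), ?_, ?_⟩
  · rwa [hsupp]
  · rw [hsupp, card_compl]; omega

end Equiv.Perm

open Equiv.Perm

/-- For a finite type with at least 3 elements, the pseudocentre of the symmetric
group is the alternating group. -/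
theorem pseudocentre_perm_eq_alternating (α : Type*) [Fintype α] [DecidableEq α]
    (h : 3 ≤ Fintype.card α) :
    P (Equiv.Perm α) = alternatingGroup α := by
  refine le_antisymm ?_ (le_iInf (alternatingGroup_le_normalClosure_centralizer h))
  obtain ⟨c, hc, hodd, hfix⟩ := exists_isCycle_odd_card_support h
  exact (iInf_le _ c).trans
    (normalClosure_le_normal (centralizer_le_alternatingGroup hc hodd hfix))
end

section
/- Let I be an infinite set (an infinite type). Then the full symmetric group Sym(I) = Equiv.Perm I is pseudocentral, i.e. P(Equiv.Perm I) is the whole group. -/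
/-!
Fix `g` and let `N` be the normal closure of its centralizer. First, `N` contains a permutation
`Λ` acting as the shift on `|I|` disjoint copies `e (a, ·)` of `ℤ`: if `g` fixes `|I|` points,
take such a shift supported on the fixed points of `g`; otherwise `g` moves a set `T` of size
`|I|` with `g T ∩ T = ∅` (a maximal such set), and a suitable commutator `⁅g, w⁆ ∈ N` is such
a shift.

The commutator of `Λ` with the permutation acting as `π` on all levels `e (·, n)`, `n ≥ 0`, acts
as `π` on level `0` and trivially elsewhere. Every permutation fixing `|I|` points is conjugate
to one of these, and every permutation is a product of two permutations fixing `|I|` points.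
-/

open Cardinal Function Set
open scoped commutatorElement

universe u

theorem commutatorElement_eq_iff_mul_eq {G : Type*} [Group G] {a b c : G} :
    ⁅a, b⁆ = c ↔ a * b = c * b * a := by
  rw [commutatorElement_def, mul_inv_eq_iff_eq_mul, mul_inv_eq_iff_eq_mul]

namespace Cardinal

variable {α : Type u}

theorem mk_eq_of_range_subset {s : Set α} {k : α → α} (hk : Injective k) (h : range k ⊆ s) :
    #s = #α :=
  le_antisymm (mk_set_le s) ((mk_range_eq k hk).symm.trans_le (mk_le_mk_of_subset h))

theorem mk_eq_or_mk_compl_eq [Infinite α] (s : Set α) : #s = #α ∨ #(sᶜ : Set α) = #α :=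
  (mk_set_le s).eq_or_lt.imp id (mk_compl_of_infinite s)

theorem mk_prod_int [Infinite α] : #(α × ℤ) = #α := by
  simp [mul_aleph0_eq (aleph0_le_mk α)]

theorem mk_sum_self [Infinite α] : #(α ⊕ α) = #α := by
  simp [add_eq_self (aleph0_le_mk α)]

end Cardinal

namespace Equiv.Perm

variable {α : Type u} {β : Type*}

theorem exists_perm_apply_eq_of_injective {i j : β → α} (hi : Injective i) (hj : Injective j)
    (h : #((range i)ᶜ : Set α) = #((range j)ᶜ : Set α)) : ∃ w : Perm α, ∀ b, w (i b) = j b := by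
  let f : range i ↪ α := (Equiv.ofInjective i hi).symm.toEmbedding.trans ⟨j, hj⟩
  have hf : range f = range j := by
    ext x; constructor
    · rintro ⟨y, rfl⟩; exact ⟨_, rfl⟩
    · rintro ⟨b, rfl⟩; exact ⟨⟨i b, b, rfl⟩, by simp [f]⟩
  obtain ⟨w, hw⟩ := extend_function f (Cardinal.eq.mp (hf ▸ h))
  exact ⟨w, fun b => by simpa [f] using hw ⟨i b, b, rfl⟩⟩

theorem exists_forall_apply_notMem_subset (g : Perm α) :
    ∃ T : Set α, (∀ x ∈ T, g x ∉ T) ∧ (fixedPoints g)ᶜ ⊆ T ∪ g '' T ∪ g.symm '' T := by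
  obtain ⟨T, hT⟩ := zorn_subset {T : Set α | ∀ x ∈ T, g x ∉ T} fun c hc hchain => by
    refine ⟨⋃₀ c, ?_, fun s hs => subset_sUnion_of_mem hs⟩
    rintro x ⟨t, ht, hxt⟩ ⟨t', ht', hxt'⟩
    rcases hchain.total ht ht' with hsub | hsub
    · exact hc ht' x (hsub hxt) hxt'
    · exact hc ht x hxt (hsub hxt')
  refine ⟨T, hT.prop, fun x hx => ?_⟩
  by_contra hxT
  simp only [mem_union, mem_image, not_or, not_exists, not_and] at hxT
  obtain ⟨⟨hxT, hgxT⟩, hgx⟩ := hxT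
  have hins : ∀ y ∈ insert x T, g y ∉ insert x T := by
    rintro y (rfl | hy) (hgy | hgy)
    · exact hx hgy
    · exact hgx (g y) hgy (g.symm_apply_apply y)
    · exact hgxT y hy hgy
    · exact hT.prop y hy hgy
  exact hxT (hT.eq_of_subset hins (subset_insert x T) ▸ mem_insert x T)

theorem exists_injective_forall_apply_ne [Infinite α] {g : Perm α}
    (hg : #((fixedPoints g)ᶜ : Set α) = #α) {γ : Type u} (hγ : #γ ≤ #α) :
    ∃ t : γ → α, Injective t ∧ ∀ a b, g (t a) ≠ t b := by
  obtain ⟨T, hTfree, hTcover⟩ := exists_forall_apply_notMem_subset g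
  have hT : #T = #α := by
    refine (mk_set_le T).antisymm (not_lt.mp fun hT => ?_)
    have h0 := aleph0_le_mk α
    have hlt : #(T ∪ g '' T ∪ g.symm '' T : Set α) < #α :=
      (mk_union_le _ _).trans_lt <| add_lt_of_lt h0
        ((mk_union_le _ _).trans_lt (add_lt_of_lt h0 hT (mk_image_le.trans_lt hT)))
        (mk_image_le.trans_lt hT)
    exact (hg ▸ mk_le_mk_of_subset hTcover).not_gt hlt
  obtain ⟨t⟩ : Nonempty (γ ↪ T) := Cardinal.le_def _ _ |>.mp (hγ.trans hT.ge)
  exact ⟨fun a => t a, Subtype.val_injective.comp t.injective,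
    fun a b h => hTfree _ (t a).2 (h ▸ (t b).2)⟩

theorem exists_eq_mul_mk_fixedPoints_eq [Infinite α] (σ : Perm α) :
    ∃ σ₁ σ₂ : Perm α, σ = σ₁ * σ₂ ∧ #(fixedPoints σ₁) = #α ∧ #(fixedPoints σ₂) = #α := by
  rcases mk_eq_or_mk_compl_eq (fixedPoints σ) with hσ | hσ
  · exact ⟨σ, 1, (mul_one σ).symm, hσ, by simp⟩
  obtain ⟨t, ht, hfree⟩ := exists_injective_forall_apply_ne hσ mk_sum_self.le
  set j : α ⊕ α → α := Sum.elim (σ ∘ t ∘ Sum.inl) (t ∘ Sum.inr)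
  have hj : Injective j := (σ.injective.comp (ht.comp Sum.inl_injective)).sumElim
    (ht.comp Sum.inr_injective) fun a b => hfree _ _
  have htc : #((range t)ᶜ : Set α) = #α := by
    refine mk_eq_of_range_subset (σ.injective.comp (ht.comp Sum.inl_injective)) ?_
    rintro _ ⟨a, rfl⟩ ⟨b, hb⟩
    exact hfree _ _ hb.symm
  have hjc : #((range j)ᶜ : Set α) = #α := by
    refine mk_eq_of_range_subset (ht.comp Sum.inl_injective) ?_
    rintro _ ⟨a, rfl⟩ ⟨b | b, hb⟩
    · exact hfree _ _ hb
    · exact Sum.inr_ne_inl (ht hb)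
  -- `w` agrees with `σ` on `t ∘ inl` and fixes `t ∘ inr`, so `σ * w⁻¹` fixes `σ ∘ t ∘ inl`
  obtain ⟨w, hw⟩ := exists_perm_apply_eq_of_injective ht hj (htc.trans hjc.symm)
  refine ⟨σ * w⁻¹, w, by group, ?_, ?_⟩
  · refine mk_eq_of_range_subset (σ.injective.comp (ht.comp Sum.inl_injective)) ?_
    rintro _ ⟨a, rfl⟩
    exact congrArg σ (Perm.inv_eq_iff_eq.mpr (hw (Sum.inl a)).symm)
  · refine mk_eq_of_range_subset (ht.comp Sum.inr_injective) ?_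
    rintro _ ⟨a, rfl⟩
    exact hw (Sum.inr a)

def shift (β : Type*) : Perm (β × ℤ) := Equiv.prodCongr (Equiv.refl β) (Equiv.addRight 1)

@[simp]
theorem shift_apply (b : β) (n : ℤ) : shift β (b, n) = (b, n + 1) := rfl

theorem commutatorElement_prodCongrLeft_shift (φ : ℤ → Perm β) :
    ⁅(Equiv.prodCongrLeft φ : Perm (β × ℤ)), shift β⁆ =
      Equiv.prodCongrLeft fun n => φ n * (φ (n - 1))⁻¹ := by
  rw [commutatorElement_eq_iff_mul_eq]
  ext ⟨b, n⟩ <;> simp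

theorem commutatorElement_extendDomain {p : α → Prop} [DecidablePred p] (f : β ≃ Subtype p)
    (Φ S : Perm β) {Λ : Perm α} (hΛ : ∀ b, Λ (f b) = f (S b)) :
    ⁅Φ.extendDomain f, Λ⁆ = ⁅Φ, S⁆.extendDomain f := by
  rw [commutatorElement_eq_iff_mul_eq]
  ext x
  by_cases hx : p x
  · obtain ⟨b, rfl⟩ : ∃ b, (f b : α) = x := ⟨f.symm ⟨x, hx⟩, by simp⟩
    simp [hΛ, commutatorElement_def]
  · have hΛx : ¬ p (Λ x) := by
      intro h
      apply hx
      have : Λ x = Λ (f (S⁻¹ (f.symm ⟨Λ x, h⟩))) := by simp [hΛ]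
      rw [Λ.injective this]
      exact Subtype.prop _
    simp [extendDomain_apply_not_subtype, hx, hΛx]

theorem exists_mem_apply_eq_of_semiconj_shift {N : Subgroup (Perm α)} [N.Normal] {Λ : Perm α}
    (hΛ : Λ ∈ N) {e : β × ℤ → α} (he : Injective e) (hlanes : Semiconj e (shift β) Λ)
    (π : Perm β) :
    ∃ D ∈ N, (∀ b, D (e (b, 0)) = e (π b, 0)) ∧ ∀ x ∉ range fun b => e (b, 0), D x = x := by
  classical
  set φ : ℤ → Perm β := fun n => if 0 ≤ n then π else 1
  have hφ : (fun n => φ n * (φ (n - 1))⁻¹) = Pi.mulSingle 0 π := by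
    ext n : 1
    rcases lt_trichotomy n 0 with hn | rfl | hn
    · simp [φ, hn.ne, show ¬0 ≤ n by omega, show ¬1 ≤ n by omega]
    · simp [φ]
    · simp [φ, hn.ne', hn.le, show 1 ≤ n by omega]
  set f := Equiv.ofInjective e he
  refine ⟨extendDomain (Equiv.prodCongrLeft (Pi.mulSingle 0 π)) f, ?_, fun b => ?_, fun x hx => ?_⟩
  · rw [← hφ, ← commutatorElement_prodCongrLeft_shift,
      ← commutatorElement_extendDomain _ _ _ fun b => by simpa [f] using (hlanes b).symm]
    exact Subgroup.commutator_le_right ⊤ N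
      (Subgroup.commutator_mem_commutator (Subgroup.mem_top _) hΛ)
  · simpa [f, prodCongrLeft_apply] using
      extendDomain_apply_image (prodCongrLeft (Pi.mulSingle 0 π)) f (b, 0)
  · by_cases hxe : x ∈ range e
    · obtain ⟨⟨b, n⟩, rfl⟩ := hxe
      have hn : n ≠ 0 := by rintro rfl; exact hx ⟨b, rfl⟩
      simpa [f, hn, prodCongrLeft_apply] using
        extendDomain_apply_image (prodCongrLeft (Pi.mulSingle 0 π)) f (b, n)
    · exact extendDomain_apply_not_subtype _ f hxe

theorem mem_of_mk_fixedPoints_eq {N : Subgroup (Perm α)} [hN : N.Normal] {Λ : Perm α}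
    (hΛ : Λ ∈ N) {e : α × ℤ → α} (he : Injective e) (hlanes : Semiconj e (shift α) Λ)
    {σ : Perm α} (hσ : #(fixedPoints σ) = #α) : σ ∈ N := by
  obtain ⟨D, hDN, hDe, hDfix⟩ := exists_mem_apply_eq_of_semiconj_shift hΛ he hlanes σ
  set j : ↥(fixedPoints σ)ᶜ → α := fun y => e (y, 0)
  have hj : Injective j := fun y z h => Subtype.ext (congrArg Prod.fst (he h))
  have hjc : #((range j)ᶜ : Set α) = #α := by
    refine mk_eq_of_range_subset (k := fun a => e (a, 1)) (fun a b h => by simpa using he h) ?_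
    rintro _ ⟨a, rfl⟩ ⟨y, hy⟩
    simpa using he hy
  obtain ⟨ψ, hψ⟩ := exists_perm_apply_eq_of_injective Subtype.val_injective hj
    (by rw [Subtype.range_coe, compl_compl, hσ, hjc])
  have hψσ : ψ * σ = D * ψ := by
    ext y
    by_cases hy : σ y = y
    · simp only [Perm.mul_apply, hy]
      by_cases hψy : ψ y ∈ range fun b => e (b, 0)
      · obtain ⟨b, hb⟩ := hψy
        have hσb : σ b = b := by
          by_contra hσb
          have : ψ b = ψ y := (hψ ⟨b, hσb⟩).trans hb
          exact hσb (ψ.injective this ▸ hy)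
        rw [← hb, hDe, hσb]
      · exact (hDfix _ hψy).symm
    · have hσy : σ (σ y) ≠ σ y := fun h => hy (σ.injective h)
      simp only [Perm.mul_apply]
      rw [hψ ⟨y, hy⟩, hψ ⟨σ y, hσy⟩]
      exact (hDe y).symm
  have hconj : σ = ψ⁻¹ * D * ψ := by rw [mul_assoc, ← hψσ, inv_mul_cancel_left]
  simpa [hconj] using hN.conj_mem D hDN ψ⁻¹

theorem eq_top_of_semiconj_shift [Infinite α] {N : Subgroup (Perm α)} [N.Normal] {Λ : Perm α}
    (hΛ : Λ ∈ N) {e : α × ℤ → α} (he : Injective e) (hlanes : Semiconj e (shift α) Λ) :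
    N = ⊤ := by
  refine (Subgroup.eq_top_iff' N).mpr fun σ => ?_
  obtain ⟨σ₁, σ₂, rfl, h₁, h₂⟩ := exists_eq_mul_mk_fixedPoints_eq σ
  exact N.mul_mem (mem_of_mk_fixedPoints_eq hΛ he hlanes h₁)
    (mem_of_mk_fixedPoints_eq hΛ he hlanes h₂)

theorem exists_commute_semiconj_shift [Infinite α] {g : Perm α} (hg : #(fixedPoints g) = #α) :
    ∃ Λ : Perm α, Commute Λ g ∧ ∃ e : α × ℤ → α, Injective e ∧ Semiconj e (shift α) Λ := by
  classical
  obtain ⟨φ⟩ : Nonempty (α × ℤ ≃ fixedPoints g) := Cardinal.eq.mp (mk_prod_int.trans hg.symm)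
  set Λ := (shift α).extendDomain φ
  have hΛ : ∀ x ∈ fixedPoints g, Λ x ∈ fixedPoints g := fun x hx => by
    rw [show Λ x = _ from extendDomain_apply_subtype (shift α) φ hx]
    exact Subtype.prop _
  refine ⟨Λ, ?_, fun x => φ x, Subtype.val_injective.comp φ.injective,
    fun x => (extendDomain_apply_image _ _ x).symm⟩
  ext x
  by_cases hx : x ∈ fixedPoints g
  · have hgx : g x = x := hx
    have hgΛx : g (Λ x) = Λ x := hΛ x hx
    rw [Perm.mul_apply, Perm.mul_apply, hgx, hgΛx]
  · have hgx : g x ∉ fixedPoints g := fun h => hx (g.injective h)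
    rw [Perm.mul_apply, Perm.mul_apply, show Λ x = x from extendDomain_apply_not_subtype _ _ hx,
      show Λ (g x) = g x from extendDomain_apply_not_subtype _ _ hgx]

theorem injective_sumElim_inv_comp {g : Perm α} {u v : β → α} (hu : Injective u)
    (hv : Injective v) (huv : ∀ a b, g (u a) ≠ v b) : Injective (Sum.elim u (⇑g⁻¹ ∘ v)) :=
  hu.sumElim (g⁻¹.injective.comp hv) fun a b h => huv a b (by simp [h])

theorem range_subset_compl_range_sumElim_inv_comp {g : Perm α} {u v : β → α} {z : α → α}
    (hzu : ∀ a b, z a ≠ u b) (hzv : ∀ a b, g (z a) ≠ v b) :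
    range z ⊆ (range (Sum.elim u (⇑g⁻¹ ∘ v)))ᶜ := by
  rintro _ ⟨a, rfl⟩ ⟨b | b, hb⟩
  · exact hzu a b hb.symm
  · exact hzv a b (by simp [← hb])

theorem exists_semiconj_shift_commutatorElement [Infinite α] {g : Perm α}
    (hg : #((fixedPoints g)ᶜ : Set α) = #α) :
    ∃ w : Perm α, ∃ e : α × ℤ → α, Injective e ∧ Semiconj e (shift α) ⇑⁅g, w⁆ := by
  obtain ⟨t, ht, hfree⟩ := exists_injective_forall_apply_ne hg (mk_sum_self.trans mk_prod_int).le
  set x := t ∘ Sum.inl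
  set y := t ∘ Sum.inr
  have hx : Injective x := ht.comp Sum.inl_injective
  have hy : Injective y := ht.comp Sum.inr_injective
  have hxy : ∀ a b, x a ≠ y b := fun a b h => Sum.inl_ne_inr (ht h)
  have hx0 : Injective fun a => x (a, 0) := fun a b h => by simpa using hx h
  have hy0 : Injective fun a => y (a, 0) := fun a b h => by simpa using hy h
  -- `w` sends `y p ↦ x p` and `g⁻¹ (y p) ↦ g⁻¹ (x (shift p))`, so `g w g⁻¹ w⁻¹` shifts `x`
  obtain ⟨w, hw⟩ := exists_perm_apply_eq_of_injective
    (injective_sumElim_inv_comp hy hy fun _ _ => hfree _ _)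
    (injective_sumElim_inv_comp hx (hx.comp (shift α).injective) fun _ _ => hfree _ _)
    ((mk_eq_of_range_subset hx0 (range_subset_compl_range_sumElim_inv_comp
        (fun _ _ => hxy _ _) fun _ _ => hfree _ _)).trans
      (mk_eq_of_range_subset hy0 (range_subset_compl_range_sumElim_inv_comp
        (fun _ _ h => hxy _ _ h.symm) fun _ _ => hfree _ _)).symm)
  refine ⟨w, x, hx, fun p => ?_⟩
  have hwy : w.symm (x p) = y p := w.symm_apply_eq.mpr (hw (Sum.inl p)).symm
  have hwgy : w (g.symm (y p)) = g.symm (x (shift α p)) := hw (Sum.inr p)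
  simp [commutatorElement_def, hwy, hwgy]

theorem exists_semiconj_shift_mem_normalClosure_centralizer [Infinite α] (g : Perm α) :
    ∃ Λ ∈ Subgroup.normalClosure (Subgroup.centralizer {g} : Set (Perm α)),
      ∃ e : α × ℤ → α, Injective e ∧ Semiconj e (shift α) Λ := by
  set N := Subgroup.normalClosure (Subgroup.centralizer {g} : Set (Perm α))
  have hcentral : ∀ h, Commute h g → h ∈ N := fun h hh =>
    Subgroup.subset_normalClosure (Subgroup.mem_centralizer_singleton_iff.mpr hh.eq)
  rcases mk_eq_or_mk_compl_eq (fixedPoints g) with hg | hg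
  · obtain ⟨Λ, hΛg, hlanes⟩ := exists_commute_semiconj_shift hg
    exact ⟨Λ, hcentral Λ hΛg, hlanes⟩
  · obtain ⟨w, hlanes⟩ := exists_semiconj_shift_commutatorElement hg
    exact ⟨_, Subgroup.commutator_le_left N ⊤
      (Subgroup.commutator_mem_commutator (hcentral g (Commute.refl g)) (Subgroup.mem_top w)),
      hlanes⟩

end Equiv.Perm

/-- The symmetric group on an infinite set is pseudocentral. -/
theorem pseudocentre_perm_infinite (I : Type*) [Infinite I] :
    P (Equiv.Perm I) = ⊤ := by
  refine eq_top_iff.mpr fun σ _ => Subgroup.mem_iInf.mpr fun g => ?_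
  obtain ⟨Λ, hΛ, e, he, hlanes⟩ := Equiv.Perm.exists_semiconj_shift_mem_normalClosure_centralizer g
  rw [Equiv.Perm.eq_top_of_semiconj_shift hΛ he hlanes]
  exact Subgroup.mem_top σ
end

section
/- The class of pseudocentral groups is local: if G is a group such that every pair of elements a, b of G is contained in some pseudocentral subgroup X of G (i.e. a subgroup X with a, b ∈ X such that P(X) = X, where X is viewed as a group in its own right), then G itself is pseudocentral. In particular, if every finitely generated subgroup of G is contained in a pseudocentral subgroup, then G is pseudocentral. -/
open Subgroup

section

variable {H G : Type*} [Group H] [Group G]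

theorem normalClosure_centralizer_le_comap (f : H →* G) (h : H) :
    normalClosure (centralizer {h} : Set H) ≤
      (normalClosure (centralizer {f h} : Set G)).comap f := by
  refine (comap_normalClosure_image_ge _ f).trans (comap_mono (normalClosure_mono ?_))
  have hmap := map_centralizer_le_centralizer_image {h} f
  rw [Set.image_singleton] at hmap
  exact hmap

theorem P_le_comap_normalClosure_centralizer (f : H →* G) (h : H) :
    P H ≤ (normalClosure (centralizer {f h} : Set G)).comap f :=
  (iInf_le _ h).trans (normalClosure_centralizer_le_comap f h)

end

theorem P_eq_top_of_forall_pair_mem_pseudocentral {G : Type*} [Group G]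
    (h : ∀ a b : G, ∃ X : Subgroup G, a ∈ X ∧ b ∈ X ∧ P X = ⊤) : P G = ⊤ := by
  refine eq_top_iff.mpr fun b _ => mem_iInf.mpr fun g => ?_
  obtain ⟨X, hg, hb, hX⟩ := h g b
  have hbX : (⟨b, hb⟩ : X) ∈ P X := hX ▸ mem_top _
  exact P_le_comap_normalClosure_centralizer X.subtype ⟨g, hg⟩ hbX

/-- The class of pseudocentral groups is local. -/
theorem pseudocentral_is_local {G : Type*} [Group G] :
    ((∀ a b : G, ∃ X : Subgroup G, a ∈ X ∧ b ∈ X ∧ P X = ⊤) → P G = ⊤) ∧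
    ((∀ H : Subgroup G, H.FG → ∃ X : Subgroup G, H ≤ X ∧ P X = ⊤) → P G = ⊤) := by
  refine ⟨P_eq_top_of_forall_pair_mem_pseudocentral, fun h =>
    P_eq_top_of_forall_pair_mem_pseudocentral fun a b => ?_⟩
  obtain ⟨X, hle, hX⟩ := h (closure {a, b}) ((fg_iff _).mpr ⟨{a, b}, rfl, Set.toFinite _⟩)
  exact ⟨X, hle (subset_closure (by simp)), hle (subset_closure (by simp)), hX⟩
end

section
/- Let G be a group. Then: (1) the commutator subgroup of the pseudocentre is contained in the second derived subgroup of G, i.e. ⁅P(G), P(G)⁆ ≤ G'' = ⁅⁅G,G⁆,⁅G,G⁆⁆; (2) for any subgroups K ≤ H of G with ⁅H, ⁅G,G⁆⁆ ≤ K, one has ⁅H, P(G)⁆ ≤ K; in particular the centralizer of G' = ⁅G,G⁆ in G is contained in the centralizer of P(G) in G, and P(G) centralizes the second centre Z₂(G) (the second term of the upper central series of G). -/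
open scoped commutatorElement

section

open Subgroup

variable {G : Type*} [Group G]

theorem commutatorElement_mul_right_of_commute {g c : G} (u : G) (h : Commute g c) :
    ⁅g, u * c⁆ = ⁅g, u⁆ := by
  simp only [commutatorElement_def, mul_inv_rev, mul_assoc, ← h.inv_left.eq]
  group

theorem normalClosure_le_commutator_sup (H : Subgroup G) :
    normalClosure (H : Set G) ≤ commutator G ⊔ H :=
  haveI : (commutator G ⊔ H).Normal := Normal.of_commutator_le G le_sup_left
  normalClosure_le_normal (SetLike.coe_subset_coe.mpr le_sup_right)

theorem P_le_commutator_sup_centralizer (g : G) :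
    P G ≤ commutator G ⊔ centralizer {g} :=
  (iInf_le _ g).trans (normalClosure_le_commutator_sup _)

theorem exists_mem_commutator_commutatorElement_eq_of_mem_P (g : G) {x : G} (hx : x ∈ P G) :
    ∃ u ∈ commutator G, ⁅g, x⁆ = ⁅g, u⁆ := by
  obtain ⟨u, hu, c, hc, rfl⟩ := mem_sup_of_normal_left.mp (P_le_commutator_sup_centralizer g hx)
  exact ⟨u, hu, commutatorElement_mul_right_of_commute u (mem_centralizer_singleton_iff.mp hc).symm⟩

theorem commutator_P_le_of_commutator_commutator_le {H K : Subgroup G}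
    (h : ⁅H, commutator G⁆ ≤ K) : ⁅H, P G⁆ ≤ K :=
  commutator_le.mpr fun g hg x hx => by
    obtain ⟨u, hu, hxu⟩ := exists_mem_commutator_commutatorElement_eq_of_mem_P g hx
    exact hxu ▸ h (commutator_mem_commutator hg hu)

theorem commutator_P_P_le_derivedSeries_two : ⁅P G, P G⁆ ≤ derivedSeries G 2 := by
  have hG'' : derivedSeries G 2 = ⁅commutator G, commutator G⁆ := by
    rw [derivedSeries_succ, derivedSeries_one]
  have hG'P : ⁅commutator G, P G⁆ ≤ derivedSeries G 2 :=
    commutator_P_le_of_commutator_commutator_le hG''.ge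
  exact commutator_P_le_of_commutator_commutator_le ((commutator_comm _ _).trans_le hG'P)

theorem commutator_upperCentralSeries_two_commutator_eq_bot :
    ⁅Subgroup.upperCentralSeries G 2, commutator G⁆ = ⊥ := by
  have hZ₂ : ⁅Subgroup.upperCentralSeries G 2, (⊤ : Subgroup G)⁆ ≤ center G :=
    Subgroup.upperCentralSeries_one G ▸ commutator_upperCentralSeries_top_le G 1
  have hcentral : ⁅center G, (⊤ : Subgroup G)⁆ = ⊥ := by
    rw [commutator_eq_bot_iff_le_centralizer, coe_top, centralizer_univ]
  have hZ₂central : ⁅⁅Subgroup.upperCentralSeries G 2, ⊤⁆, ⊤⁆ = ⊥ :=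
    eq_bot_iff.mpr ((commutator_mono hZ₂ le_rfl).trans hcentral.le)
  rw [commutator_comm, commutator_def]
  exact commutator_commutator_eq_bot_of_rotate (by rwa [commutator_comm ⊤]) hZ₂central

end

/-- (1) `⁅P G, P G⁆ ≤ G''`; (2) every `G'`-central section of `G` is centralized by
`P G`; in particular `C_G(G') ≤ C_G(P G)` and `P G` centralizes `Z₂(G)`. -/
theorem pseudocentre_derived {G : Type*} [Group G] :
    ⁅P G, P G⁆ ≤ derivedSeries G 2 ∧
    (∀ H K : Subgroup G, K ≤ H → ⁅H, commutator G⁆ ≤ K → ⁅H, P G⁆ ≤ K) ∧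
    Subgroup.centralizer (commutator G : Set G) ≤ Subgroup.centralizer (P G : Set G) ∧
    P G ≤ Subgroup.centralizer (upperCentralSeries G 2 : Set G) := by
  refine ⟨commutator_P_P_le_derivedSeries_two,
    fun H K _ => commutator_P_le_of_commutator_commutator_le, ?_, ?_⟩
  · rw [← Subgroup.commutator_eq_bot_iff_le_centralizer, ← le_bot_iff]
    exact commutator_P_le_of_commutator_commutator_le
      (Subgroup.commutator_eq_bot_iff_le_centralizer.mpr le_rfl).le
  · rw [← Subgroup.commutator_eq_bot_iff_le_centralizer, Subgroup.commutator_comm, ← le_bot_iff]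
    exact commutator_P_le_of_commutator_commutator_le
      commutator_upperCentralSeries_two_commutator_eq_bot.le
end

section
/- Let G be a pseudocentral group, i.e. P(G) = G. Then G' = G'' (the commutator subgroup equals the second derived subgroup, i.e. derivedSeries G 1 = derivedSeries G 2) and Z₂(G) = Z(G) (the second term of the upper central series equals the centre). Consequently, every solvable pseudocentral group is abelian. -/
/-! If `P G = ⊤`, every element with a normal centralizer is central, because that centralizer
is its own normal closure. Conjugation moves an element of `Z₂(G)` only by a central factor, so
its centralizer is normal and `Z₂(G) = Z(G)`. If `G'' = 1`, the centralizer of any `d ∈ G'`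
contains `G'` and is therefore normal, so `G' ≤ Z(G)`, i.e. `G = Z₂(G) = Z(G)`. Applied to the
pseudocentral quotient `G ⧸ G''` this yields `G' = G''`, so the derived series is constant
from `G'` on and vanishes there when `G` is solvable. -/

section

open Subgroup
open scoped commutatorElement

variable {G : Type*} [Group G]

theorem P_eq_top_iff :
    P G = ⊤ ↔ ∀ g : G, normalClosure (centralizer {g} : Set G) = ⊤ :=
  iInf_eq_top

theorem P_eq_top_of_surjective {H : Type*} [Group H] {f : G →* H}
    (hf : Function.Surjective f) (hG : P G = ⊤) : P H = ⊤ := by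
  refine P_eq_top_iff.mpr fun h ↦ ?_
  obtain ⟨g, rfl⟩ := hf h
  rw [eq_top_iff, ← map_top_of_surjective f hf, ← P_eq_top_iff.mp hG g,
    map_normalClosure _ f hf, ← coe_map]
  have hmap := map_centralizer_le_centralizer_image {g} f
  rw [Set.image_singleton] at hmap
  exact normalClosure_mono hmap

theorem mem_center_of_centralizer_normal (hG : P G = ⊤) {x : G}
    (hx : (centralizer {x}).Normal) : x ∈ center G := by
  have hC : centralizer {x} = ⊤ := by
    rw [← normalClosure_eq_self (centralizer {x}), P_eq_top_iff.mp hG x]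
  exact Set.singleton_subset_iff.mp (centralizer_eq_top_iff_subset.mp hC)

theorem centralizer_normal_of_mem_upperCentralSeries_two {x : G}
    (hx : x ∈ Subgroup.upperCentralSeries G 2) : (centralizer {x}).Normal where
  conj_mem a ha g := by
    set z := ⁅x, g⁻¹⁆⁻¹
    have hz : z ∈ center G := by
      rw [← Subgroup.upperCentralSeries_one]
      exact inv_mem (Subgroup.mem_upperCentralSeries_succ_iff.mp hx g⁻¹)
    have hconj : g⁻¹ * x * g = z * x := by
      simp only [z, commutatorElement_def]; group
    rw [mem_centralizer_singleton_iff] at ha ⊢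
    have hza : a * z = z * a := mem_center_iff.mp hz a
    calc g * a * g⁻¹ * x = g * (a * (g⁻¹ * x * g)) * g⁻¹ := by group
      _ = g * (z * (x * a)) * g⁻¹ := by rw [hconj, ← mul_assoc a, hza, mul_assoc z, ha]
      _ = g * ((g⁻¹ * x * g) * a) * g⁻¹ := by rw [hconj, mul_assoc z]
      _ = x * (g * a * g⁻¹) := by group

theorem upperCentralSeries_two_eq_center (hG : P G = ⊤) :
    Subgroup.upperCentralSeries G 2 = center G := by
  refine le_antisymm (fun x hx ↦ ?_) ?_
  · exact mem_center_of_centralizer_normal hG (centralizer_normal_of_mem_upperCentralSeries_two hx)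
  · rw [← Subgroup.upperCentralSeries_one]
    exact Subgroup.upperCentralSeries_mono G one_le_two

theorem center_eq_top_of_commutator_le_center (hG : P G = ⊤)
    (h : commutator G ≤ center G) : center G = ⊤ := by
  rw [← upperCentralSeries_two_eq_center hG, eq_top_iff]
  intro x _
  refine Subgroup.mem_upperCentralSeries_succ_iff.mpr fun y ↦ ?_
  rw [Subgroup.upperCentralSeries_one]
  exact h (commutator_mem_commutator (mem_top x) (mem_top y))

theorem center_eq_top_of_derivedSeries_two_eq_bot (hG : P G = ⊤)
    (h : derivedSeries G 2 = ⊥) : center G = ⊤ := by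
  refine center_eq_top_of_commutator_le_center hG fun d hd ↦ ?_
  have hG' : commutator G ≤ centralizer (commutator G) := by
    rwa [← commutator_eq_bot_iff_le_centralizer, ← derivedSeries_one]
  exact mem_center_of_centralizer_normal hG <| .of_commutator_le G <|
    hG'.trans (centralizer_le (Set.singleton_subset_iff.mpr hd))

theorem derivedSeries_one_eq_two (hG : P G = ⊤) : derivedSeries G 1 = derivedSeries G 2 := by
  refine le_antisymm ?_ (derivedSeries_antitone G one_le_two)
  set N := derivedSeries G 2
  have hmk := QuotientGroup.mk'_surjective N
  have hQ : center (G ⧸ N) = ⊤ := by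
    refine center_eq_top_of_derivedSeries_two_eq_bot (P_eq_top_of_surjective hmk hG) ?_
    rw [← map_derivedSeries_eq hmk, QuotientGroup.map_mk'_self]
  rwa [← commutator_eq_bot_iff_center_eq_top, ← derivedSeries_one, ← map_derivedSeries_eq hmk,
    Subgroup.map_eq_bot_iff, QuotientGroup.ker_mk'] at hQ

theorem derivedSeries_succ_eq_derivedSeries_one (h : derivedSeries G 1 = derivedSeries G 2) :
    ∀ n, derivedSeries G (n + 1) = derivedSeries G 1
  | 0 => rfl
  | n + 1 => by
    rw [derivedSeries_succ, derivedSeries_succ_eq_derivedSeries_one h n, ← derivedSeries_succ, ← h]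

theorem commutator_eq_bot_of_isSolvable [Group.IsSolvable G]
    (h : derivedSeries G 1 = derivedSeries G 2) : commutator G = ⊥ := by
  obtain ⟨n, hn⟩ := Group.IsSolvable.solvable (G := G)
  rw [← derivedSeries_one, ← derivedSeries_succ_eq_derivedSeries_one h n, eq_bot_iff, ← hn]
  exact derivedSeries_antitone G n.le_succ

end

/-- In a pseudocentral group, `G' = G''`, `Z₂(G) = Z(G)`, and hence every solvable
pseudocentral group is abelian. -/
theorem pseudocentral_structure {G : Type*} [Group G] (h : P G = ⊤) :
    derivedSeries G 1 = derivedSeries G 2 ∧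
    upperCentralSeries G 2 = Subgroup.center G ∧
    (IsSolvable G → ∀ a b : G, a * b = b * a) := by
  have hder := derivedSeries_one_eq_two h
  refine ⟨hder, upperCentralSeries_two_eq_center h, fun hs a b ↦ ?_⟩
  have : Group.IsSolvable G := hs
  have hZ := (commutator_eq_bot_iff_center_eq_top G).mp (commutator_eq_bot_of_isSolvable hder)
  exact (Subgroup.mem_center_iff.mp (hZ ▸ Subgroup.mem_top a) b).symm
end

section
/- Let G be a group whose commutator subgroup G' = ⁅G,G⁆ is nilpotent (as a group). Then the pseudocentre P(G) is nilpotent (as a group). -/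
open scoped commutatorElement

namespace Subgroup

variable {G : Type*} [Group G]

theorem commutator_le_commutator_of_le_centralizer_sup {A N H : Subgroup G} [A.Normal] [N.Normal]
    (hH : ∀ a ∈ A, H ≤ centralizer {a} ⊔ N) : ⁅A, H⁆ ≤ ⁅A, N⁆ := by
  rw [commutator_le]
  intro a ha y hy
  obtain ⟨c, hc, e, he, rfl⟩ := mem_sup_of_normal_right.mp (hH a ha hy)
  have hac : ⁅a, c⁆ = 1 := (Commute.symm (mem_centralizer_singleton_iff.mp hc)).commutator_eq
  rw [commutatorElement_mul_right_eq_mul_conj, hac, one_mul]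
  exact (commutator_normal A N).conj_mem _ (commutator_mem_commutator ha he) c

theorem lowerCentralSeries_succ_le_of_le_centralizer_sup {N H : Subgroup G} [N.Normal]
    (hHH : ⁅H, H⁆ ≤ N) (hH : ∀ a ∈ N, H ≤ centralizer {a} ⊔ N) (n : ℕ) :
    H.lowerCentralSeries (n + 1) ≤ N.lowerCentralSeries n := by
  induction n with
  | zero => exact hHH
  | succ n ih =>
    calc H.lowerCentralSeries (n + 2) = ⁅H.lowerCentralSeries (n + 1), H⁆ := rfl
      _ ≤ ⁅N.lowerCentralSeries n, H⁆ := commutator_mono ih le_rfl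
      _ ≤ ⁅N.lowerCentralSeries n, N⁆ := commutator_le_commutator_of_le_centralizer_sup
          fun a ha => hH a (N.lowerCentralSeries_le_self n ha)
      _ = N.lowerCentralSeries (n + 1) := rfl

theorem isNilpotent_of_le_centralizer_sup {N H : Subgroup G} [N.Normal]
    (hHH : ⁅H, H⁆ ≤ N) (hH : ∀ a ∈ N, H ≤ centralizer {a} ⊔ N) (hN : Group.IsNilpotent N) :
    Group.IsNilpotent H := by
  obtain ⟨n, hn⟩ := (isNilpotent_iff_lowerCentralSeries N).mp hN
  refine (isNilpotent_iff_lowerCentralSeries H).mpr ⟨n + 1, le_bot_iff.mp ?_⟩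
  exact hn ▸ lowerCentralSeries_succ_le_of_le_centralizer_sup hHH hH n

end Subgroup

open Subgroup

theorem P_le_centralizer_sup_commutator {G : Type*} [Group G] (g : G) :
    P G ≤ centralizer {g} ⊔ commutator G := by
  have : (centralizer {g} ⊔ commutator G).Normal := .of_commutator_le G le_sup_right
  exact (iInf_le _ g).trans (normalClosure_le_normal (SetLike.coe_subset_coe.mpr le_sup_left))

/-- If the commutator subgroup of `G` is nilpotent, then so is the pseudocentre. -/
theorem pseudocentre_nilpotent_of_commutator_nilpotent {G : Type*} [Group G]
    (h : Group.IsNilpotent (commutator G)) :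
    Group.IsNilpotent (P G) :=
  isNilpotent_of_le_centralizer_sup (commutator_mono le_top le_top)
    (fun g _ => P_le_centralizer_sup_commutator g) h
end

section
/- Let G be a group, Z a subgroup of G contained in the centre of G, and H a subgroup of G such that G = HZ (every element of G is a product of an element of H and an element of Z). Then P(G) = ι(P(H)) · Z, where ι(P(H)) denotes the image of the pseudocentre of H (computed in the group H) under the inclusion H ↪ G; equivalently P(G) = Subgroup.map H.subtype (P H) ⊔ Z. In particular, P(G) ∩ H = ι(P(H)). -/
set_option maxHeartbeats 1000000


lemma center_le_P (G : Type*) [Group G] : Subgroup.center G ≤ P G :=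
  le_iInf fun g =>
    le_trans (Subgroup.center_le_centralizer {g}) Subgroup.le_normalClosure

/-- If `G = HZ` with `Z` central, then `P G = P(H)·Z` and `P G ∩ H = P H`. -/
theorem pseudocentre_of_central_supplement {G : Type*} [Group G] (H Z : Subgroup G)
    (hZ : Z ≤ Subgroup.center G) (hHZ : ∀ g : G, ∃ h ∈ H, ∃ z ∈ Z, g = h * z) :
    P G = Subgroup.map H.subtype (P H) ⊔ Z ∧
    P G ⊓ H = Subgroup.map H.subtype (P H) := by
  classical
  have zcomm : ∀ z ∈ Z, ∀ x : G, x * z = z * x := fun z hz x =>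
    (Subgroup.mem_center_iff.mp (hZ hz) x)
  have zconj : ∀ z ∈ Z, ∀ x : G, z * x * z⁻¹ = x := by
    intro z hz x
    rw [← zcomm z hz x, mul_assoc, mul_inv_cancel, mul_one]
  have conj_eq : ∀ z ∈ Z, ∀ h x : G, (h * z) * x * (h * z)⁻¹ = h * x * h⁻¹ := by
    intro z hz h x
    have e : z * x * z⁻¹ = x := zconj z hz x
    calc h * z * x * (h * z)⁻¹ = h * (z * x * z⁻¹) * h⁻¹ := by group
      _ = h * x * h⁻¹ := by rw [e]
  -- Z is normal
  have hZn : Z.Normal := ⟨fun n hn g => by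
    rw [zcomm n hn g, mul_assoc, mul_inv_cancel, mul_one]; exact hn⟩
  -- images of normal subgroups of H are normal in G
  have hmapn : ∀ K : Subgroup H, K.Normal → (Subgroup.map H.subtype K).Normal := by
    intro K hK
    constructor
    intro n hn g
    obtain ⟨m, hm, rfl⟩ := hn
    obtain ⟨h, hh, z, hz, rfl⟩ := hHZ g
    have key : h * z * H.subtype m * (h * z)⁻¹ = H.subtype (⟨h, hh⟩ * m * ⟨h, hh⟩⁻¹) := by
      rw [conj_eq z hz h (H.subtype m)]
      rfl
    rw [key]
    exact ⟨_, hK.conj_mem m hm ⟨h, hh⟩, rfl⟩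
  set ι := H.subtype
  have hle2 : ∀ (h : H), ∀ z ∈ Z,
      Subgroup.map ι (Subgroup.normalClosure ↑(Subgroup.centralizer {h})) ≤
        Subgroup.normalClosure ↑(Subgroup.centralizer {(h : G) * z}) := by
    intro h z hz
    rw [Subgroup.map_le_iff_le_comap]
    haveI : (Subgroup.normalClosure
        ((Subgroup.centralizer {(h : G) * z} : Subgroup G) : Set G)).Normal :=
      Subgroup.normalClosure_normal
    haveI : ((Subgroup.normalClosure
        ((Subgroup.centralizer {(h : G) * z} : Subgroup G) : Set G)).comap ι).Normal :=
      Subgroup.Normal.comap this ι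
    apply Subgroup.normalClosure_le_normal
    intro c hc
    have hc' : c ∈ Subgroup.centralizer {h} := hc
    have h1 : (h : G) * (c : G) = (c : G) * (h : G) := by
      exact_mod_cast congrArg Subtype.val (Subgroup.mem_centralizer_iff.mp hc' h rfl)
    have hmem : ι c ∈ Subgroup.centralizer {(h : G) * z} := by
      rw [Subgroup.mem_centralizer_iff]
      intro m hm
      rw [Set.mem_singleton_iff] at hm
      subst hm
      show (h : G) * z * (ι c) = (ι c) * ((h : G) * z)
      show (h : G) * z * (c : G) = (c : G) * ((h : G) * z)
      rw [mul_assoc, ← zcomm z hz (c : G), ← mul_assoc, h1, mul_assoc]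
    exact Subgroup.subset_normalClosure hmem
  have hle1 : ∀ (h : H), ∀ z ∈ Z,
      Subgroup.normalClosure ↑(Subgroup.centralizer {(h : G) * z}) ≤
        Subgroup.map ι (Subgroup.normalClosure ↑(Subgroup.centralizer {h})) ⊔ Z := by
    intro h z hz
    haveI hN1 : (Subgroup.map ι (Subgroup.normalClosure ↑(Subgroup.centralizer {h}))).Normal :=
      hmapn _ Subgroup.normalClosure_normal
    apply Subgroup.normalClosure_le_normal
    intro x hx
    have hx' : x ∈ Subgroup.centralizer {(h : G) * z} := hx
    obtain ⟨a, ha, w, hw, rfl⟩ := hHZ x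
    have hcomm : (h : G) * (a * w) = (a * w) * (h : G) := by
      have h0 := Subgroup.mem_centralizer_iff.mp hx' ((h : G) * z) rfl
      have h2 : (h : G) * (a * w) * z = (a * w) * (h : G) * z := by
        have e1 : (h : G) * (a * w) * z = (h : G) * z * (a * w) := by
          rw [mul_assoc, zcomm z hz (a * w), ← mul_assoc]
        rw [e1, h0, ← mul_assoc]
      exact mul_right_cancel h2
    have hacomm : (h : G) * a = a * (h : G) := by
      have h3 : (h : G) * a * w = a * (h : G) * w := by
        have e2 : a * (h : G) * w = a * w * (h : G) := by
          rw [mul_assoc, zcomm w hw (h : G), ← mul_assoc]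
        rw [e2, ← hcomm, mul_assoc]
      exact mul_right_cancel h3
    have haC : (⟨a, ha⟩ : H) ∈ Subgroup.centralizer {h} := by
      rw [Subgroup.mem_centralizer_iff]
      intro m hm
      rw [Set.mem_singleton_iff] at hm
      subst hm
      ext
      exact hacomm
    have haM : a ∈ Subgroup.map ι (Subgroup.normalClosure ↑(Subgroup.centralizer {h})) :=
      ⟨⟨a, ha⟩, Subgroup.subset_normalClosure haC, rfl⟩
    exact mul_mem (Subgroup.mem_sup_left haM) (Subgroup.mem_sup_right hw)
  -- central elements of H lie in P H
  have hcentH : ∀ w, w ∈ Z → ∀ hwH : w ∈ H, (⟨w, hwH⟩ : H) ∈ P H := by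
    intro w hwZ hwH
    apply center_le_P
    rw [Subgroup.mem_center_iff]
    intro b
    ext
    simp only [Subgroup.coe_mul]
    exact zcomm w hwZ (b : G)
  -- main equality
  have main : P G = Subgroup.map ι (P H) ⊔ Z := by
    apply le_antisymm
    · intro x hx
      obtain ⟨a, ha, z, hz, rfl⟩ := hHZ x
      have haP : (⟨a, ha⟩ : H) ∈ P H := by
        rw [P, Subgroup.mem_iInf]
        intro h
        have hx1 : a * z ∈ Subgroup.normalClosure
            ↑(Subgroup.centralizer {(h : G) * 1}) := by
          rw [mul_one]
          exact (Subgroup.mem_iInf.mp hx) (h : G)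
        have hx2 := hle1 h 1 (one_mem Z) hx1
        haveI hN1 : (Subgroup.map ι (Subgroup.normalClosure
            ↑(Subgroup.centralizer {h}))).Normal := hmapn _ Subgroup.normalClosure_normal
        rw [← SetLike.mem_coe, Subgroup.mul_normal, Set.mem_mul] at hx2
        obtain ⟨a', ha', z', hz', heq⟩ := hx2
        obtain ⟨m, hm, rfl⟩ := ha'
        have hw : a = ι m * (z' * z⁻¹) := by
          rw [← mul_assoc, heq, mul_assoc, mul_inv_cancel, mul_one]
        have hwZ : z' * z⁻¹ ∈ Z := mul_mem hz' (inv_mem hz)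
        have hwH : z' * z⁻¹ ∈ H := by
          have h4 : z' * z⁻¹ = (ι m)⁻¹ * a := by
            rw [hw, ← mul_assoc, inv_mul_cancel, one_mul]
          rw [h4]
          exact mul_mem (inv_mem m.2) ha
        have hwC : (⟨z' * z⁻¹, hwH⟩ : H) ∈ Subgroup.centralizer {h} := by
          apply Subgroup.center_le_centralizer
          rw [Subgroup.mem_center_iff]
          intro b
          ext
          simp only [Subgroup.coe_mul]
          exact zcomm _ hwZ (b : G)
        have h5 : (⟨a, ha⟩ : H) = m * ⟨z' * z⁻¹, hwH⟩ := by
          ext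
          exact hw
        rw [h5]
        exact mul_mem hm (Subgroup.subset_normalClosure hwC)
      exact mul_mem (Subgroup.mem_sup_left ⟨⟨a, ha⟩, haP, rfl⟩) (Subgroup.mem_sup_right hz)
    · refine sup_le (le_iInf fun g => ?_) (le_trans hZ (center_le_P G))
      obtain ⟨h, hh, z, hz, rfl⟩ := hHZ g
      intro x hx
      obtain ⟨m, hmP, rfl⟩ := hx
      have hmP' : m ∈ P H := hmP
      rw [P, Subgroup.mem_iInf] at hmP'
      exact hle2 ⟨h, hh⟩ z hz ⟨m, hmP' ⟨h, hh⟩, rfl⟩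
  refine ⟨main, ?_⟩
  apply le_antisymm
  · intro x hx
    obtain ⟨hxP, hxH⟩ := Subgroup.mem_inf.mp hx
    haveI hPHn : (P H).Normal := by
      constructor
      intro n hn g
      rw [P, Subgroup.mem_iInf] at hn ⊢
      exact fun k => Subgroup.normalClosure_normal.conj_mem n (hn k) g
    haveI : (Subgroup.map ι (P H)).Normal := hmapn _ hPHn
    rw [main] at hxP
    rw [← SetLike.mem_coe, Subgroup.mul_normal, Set.mem_mul] at hxP
    obtain ⟨a, ⟨m, hm, rfl⟩, z, hz, heq⟩ := hxP
    have hzH : z ∈ H := by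
      have h6 : z = (ι m)⁻¹ * x := by rw [← heq, ← mul_assoc, inv_mul_cancel, one_mul]
      rw [h6]
      exact mul_mem (inv_mem m.2) hxH
    refine ⟨m * ⟨z, hzH⟩, mul_mem hm (hcentH z hz hzH), ?_⟩
    rw [map_mul]
    exact heq
  · exact le_inf (main ▸ le_sup_left) (Subgroup.map_subtype_le _)
end

section
/- Let G be a pseudocentral group, i.e. P(G) = G. Then the commutator subgroup ⁅G,G⁆ is finite if and only if the quotient G/Z(G) of G by its centre is finite. (The nontrivial direction, a converse of Schur's theorem for pseudocentral groups: if G is pseudocentral and ⁅G,G⁆ is finite, then G/Z(G) is finite.) -/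
open Subgroup
open scoped commutatorElement

section

variable {G : Type*} [Group G]

theorem commutatorElement_mul_mem_center {a b z w : G} (hz : z ∈ center G)
    (hw : w ∈ center G) : ⁅a * z, b * w⁆ = ⁅a, b⁆ := by
  have hzc : z * (b * w) = b * w * z := (mem_center_iff.mp hz _).symm
  have hwc : w * a⁻¹ = a⁻¹ * w := (mem_center_iff.mp hw _).symm
  calc ⁅a * z, b * w⁆ = a * (z * (b * w) * z⁻¹) * a⁻¹ * (b * w)⁻¹ := by group
    _ = a * b * (w * a⁻¹ * w⁻¹) * b⁻¹ := by rw [hzc, mul_inv_cancel_right]; group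
    _ = ⁅a, b⁆ := by rw [hwc, mul_inv_cancel_right, commutatorElement_def]

theorem finite_commutatorSet_of_finite_quotient_center [Finite (G ⧸ center G)] :
    Finite (commutatorSet G) := by
  refine Set.Finite.subset
    (Set.finite_range fun p : (G ⧸ center G) × (G ⧸ center G) ↦ ⁅p.1.out, p.2.out⁆) ?_
  rintro _ ⟨a, b, rfl⟩
  obtain ⟨z, hza⟩ := QuotientGroup.mk_out_eq_mul (center G) a
  obtain ⟨w, hwb⟩ := QuotientGroup.mk_out_eq_mul (center G) b
  exact ⟨(a, b), by simp only [hza, hwb, commutatorElement_mul_mem_center z.2 w.2]⟩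

instance finite_commutatorSet_of_finite_commutator [Finite (commutator G)] :
    Finite (commutatorSet G) :=
  Finite.Set.subset (commutator G : Set G) (commutator_eq_closure G ▸ subset_closure)

theorem finiteIndex_centralizer_singleton [Finite (commutatorSet G)] (g : G) :
    (centralizer {g}).FiniteIndex :=
  have := Finite.of_injective _ (quotientCentralizerEmbedding g).injective
  finiteIndex_of_finite_quotient

theorem finiteIndex_centralizer_of_finite [Finite (commutatorSet G)] {s : Set G} (hs : s.Finite) :
    (centralizer s).FiniteIndex := by
  rw [centralizer_eq_iInf, ← hs.coe_toFinset]
  simp_rw [Finset.mem_coe]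
  exact finiteIndex_iInf' _ fun g _ ↦ finiteIndex_centralizer_singleton g

theorem centralizer_commutator_le_center_of_pseudocentral (h : P G = ⊤) :
    centralizer (commutator G : Set G) ≤ center G := by
  intro g hg
  have hle : commutator G ≤ centralizer {g} := fun d hd ↦
    mem_centralizer_singleton_iff.mpr (mem_centralizer_iff.mp hg d hd)
  have : (centralizer {g}).Normal := .of_commutator_le _ hle
  have htop : centralizer {g} = ⊤ := top_le_iff.mp <|
    h ▸ (iInf_le _ g).trans (normalClosure_eq_self _).le
  exact centralizer_eq_top_iff_subset.mp htop rfl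

theorem finiteIndex_center_of_pseudocentral [Finite (commutator G)] (h : P G = ⊤) :
    (center G).FiniteIndex :=
  have := finiteIndex_centralizer_of_finite (commutator G : Set G).toFinite
  finiteIndex_of_le (centralizer_commutator_le_center_of_pseudocentral h)

end

/-- A pseudocentral group is `BFC` (finite commutator subgroup) iff it is
central-by-finite. -/
theorem pseudocentral_commutator_finite_iff {G : Type*} [Group G] (h : P G = ⊤) :
    Finite (commutator G) ↔ Finite (G ⧸ Subgroup.center G) := by
  refine ⟨fun _ ↦ ?_, fun _ ↦ ?_⟩
  · have := finiteIndex_center_of_pseudocentral h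
    infer_instance
  · have := finite_commutatorSet_of_finite_quotient_center (G := G)
    infer_instance
end

section
/- Let G be a non-trivial group containing a normal nilpotent subgroup N of finite index (i.e. N is normal, N is nilpotent as a group, and the quotient G/N is finite). Then the pseudocentre P(G) is non-trivial, i.e. P(G) ≠ {1}. -/
/-!
Let `n = |G : N|`, `Z = N ∩ C_G(N)` the centre of `N`, and `K_g` the normal closure of
`C_G(g)`; note `g ∈ K_g`.

If some `z ∈ Z` has `z ^ n ≠ 1`, then `z ^ n ∈ K_g` for every `g`: as `g ^ n ∈ N` centralizes
`z`, the norm `w = ∏_{k < n} g^k z g^-k`, computed in the abelian normal subgroup `Z`, is fixed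
by conjugation with `g`, so `w ∈ C_G(g) ⊆ K_g`; and `w ≡ z ^ n` modulo `K_g` since `g ∈ K_g`.

Otherwise `Z` has exponent dividing `n`. Pick `z ≠ 1` in `Z` (possible as `N` is nilpotent;
if `N = 1` then `G` itself is finite). Its normal closure lies in `Z`, so it is abelian, torsion,
and generated by the at most `n` conjugates of `z`, hence finite. A finite non-trivial normal
subgroup contains a minimal normal subgroup `M`, and `M ≤ K_g` for every `g`: otherwise
`M ∩ K_g = 1`, so `M` commutes with `g ∈ K_g`, i.e. `M ≤ C_G(g) ⊆ K_g`.
-/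

open Subgroup Finset

namespace Subgroup

variable {G : Type*} [Group G]

theorem le_normalClosure_centralizer_of_minimal {M : Subgroup G}
    (hM : Minimal (fun K : Subgroup G => K.Normal ∧ K ≠ ⊥) M) (g : G) :
    M ≤ normalClosure (centralizer {g} : Set G) := by
  set K := normalClosure (centralizer {g} : Set G)
  have hgK : g ∈ K := subset_normalClosure (mem_centralizer_singleton_iff.mpr rfl)
  have := hM.1.1
  by_contra hMK
  have hdisj : Disjoint K M := by
    rw [disjoint_iff]
    by_contra hne
    exact hMK ((hM.2 ⟨normal_inf_normal _ _, hne⟩ inf_le_right).trans inf_le_left)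
  exact hMK fun m hm => subset_normalClosure <| mem_centralizer_singleton_iff.mpr
    (commute_of_normal_of_disjoint K M normalClosure_normal hM.1.1 hdisj g m hgK hm).eq.symm

theorem exists_minimal_normal_of_finite {B : Subgroup G} [Finite B] (hB : B.Normal)
    (hB₁ : B ≠ ⊥) : ∃ M, Minimal (fun K : Subgroup G => K.Normal ∧ K ≠ ⊥) M := by
  obtain ⟨M, ⟨hMB, hM⟩, hmin⟩ := (measure fun K : Subgroup G => Nat.card K).wf.has_min
    {K | K ≤ B ∧ K.Normal ∧ K ≠ ⊥} ⟨B, le_rfl, hB, hB₁⟩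
  have : Finite M := Finite.of_injective _ (inclusion_injective hMB)
  exact ⟨M, hM, fun K hK hKM =>
    (eq_of_le_of_card_ge hKM (not_lt.mp (hmin K ⟨hKM.trans hMB, hK⟩))).ge⟩

theorem isMulCommutative_of_le {H K : Subgroup G} [IsMulCommutative K] (h : H ≤ K) :
    IsMulCommutative H :=
  le_centralizer_iff_isMulCommutative.mp (h.trans ((le_centralizer K).trans (centralizer_le h)))

instance isMulCommutative_inf_centralizer (N : Subgroup G) :
    IsMulCommutative ↥(N ⊓ centralizer (N : Set G)) :=
  le_centralizer_iff_isMulCommutative.mp (inf_le_right.trans (centralizer_le inf_le_left))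

theorem coe_mem_inf_centralizer_of_mem_center {N : Subgroup G} {x : N} (hx : x ∈ center N) :
    (x : G) ∈ N ⊓ centralizer (N : Set G) :=
  ⟨x.2, mem_centralizer_iff.mpr fun h hh => congrArg Subtype.val (mem_center_iff.mp hx ⟨h, hh⟩)⟩

theorem le_centralizer_singleton_of_mem_inf_centralizer {N : Subgroup G} {z : G}
    (hz : z ∈ N ⊓ centralizer (N : Set G)) : N ≤ centralizer {z} :=
  fun h hh => mem_centralizer_singleton_iff.mpr (mem_centralizer_iff.mp hz.2 h hh)

theorem finite_conjugatesOf_of_finiteIndex {z : G} [(centralizer {z}).FiniteIndex] :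
    (conjugatesOf z).Finite := by
  refine (Set.finite_range fun q : G ⧸ centralizer {z} => q.out * z * q.out⁻¹).subset ?_
  intro x hx
  obtain ⟨g, rfl⟩ := isConj_iff.mp hx
  obtain ⟨h, hh⟩ := QuotientGroup.mk_out_eq_mul (centralizer {z}) g
  refine ⟨g, ?_⟩
  have hhz : (h : G) * z = z * h := mem_centralizer_singleton_iff.mp h.2
  simp only [hh, mul_inv_rev, mul_assoc, hhz, mul_inv_cancel_left]

open scoped IsMulCommutative in
theorem finite_normalClosure_singleton {A : Subgroup G} [A.Normal] [IsMulCommutative A]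
    (hA : ∀ x ∈ A, IsOfFinOrder x) {z : G} (hz : z ∈ A) (hzc : (conjugatesOf z).Finite) :
    Finite (normalClosure {z}) := by
  have hle : normalClosure {z} ≤ A := normalClosure_le_normal (Set.singleton_subset_iff.mpr hz)
  have := isMulCommutative_of_le hle
  have : Finite (Group.conjugatesOfSet {z}) := by
    rw [Group.conjugatesOfSet, Set.biUnion_singleton]
    exact hzc.to_subtype
  have : Group.FG (normalClosure {z}) := Group.closure_finite_fg _
  exact CommGroup.finite_of_fg_isMulTorsion _ fun x =>
    Submonoid.isOfFinOrder_coe.mp (hA x (hle x.2))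

open scoped IsMulCommutative in
theorem pow_mem_normalClosure_centralizer {A : Subgroup G} [A.Normal] [IsMulCommutative A]
    {g z : G} {m : ℕ} (hz : z ∈ A) (hgz : Commute (g ^ m) z) :
    z ^ m ∈ normalClosure (centralizer {g} : Set G) := by
  set K := normalClosure (centralizer {g} : Set G)
  have hgK : g ∈ K := subset_normalClosure (mem_centralizer_singleton_iff.mpr rfl)
  set a : A := ⟨z, hz⟩
  set f : ℕ → A := fun k => MulAut.conjNormal (g ^ k) a
  have hfm : f m = f 0 := by
    ext
    change g ^ m * z * (g ^ m)⁻¹ = g ^ 0 * z * (g ^ 0)⁻¹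
    rw [hgz.eq, mul_inv_cancel_right, pow_zero, one_mul, inv_one, mul_one]
  set w := ∏ k ∈ range m, f k
  have hw : MulAut.conjNormal g w = w := by
    have := prod_range_succ f m
    rw [prod_range_succ', hfm, mul_left_inj] at this
    simpa [w, f, map_prod, pow_succ', map_mul] using this
  have hwK : (w : G) ∈ K := by
    apply subset_normalClosure
    have hgw : g * w * g⁻¹ = w := congrArg Subtype.val hw
    exact mem_centralizer_singleton_iff.mpr (mul_inv_eq_iff_eq_mul.mp hgw).symm
  have hnorm : w / a ^ m ∈ K.comap A.subtype := by
    rw [← card_range m, ← prod_const, ← prod_div_distrib]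
    refine prod_mem fun k _ => ?_
    rw [mem_comap, coe_subtype, coe_div, div_eq_mul_inv]
    change g ^ k * z * (g ^ k)⁻¹ * z⁻¹ ∈ K
    rw [mul_assoc, mul_assoc, ← mul_assoc z]
    exact mul_mem (pow_mem hgK k) (normalClosure_normal.conj_mem _ (inv_mem (pow_mem hgK k)) z)
  have := (K.comap A.subtype).div_mem hwK hnorm
  rwa [div_div_cancel] at this

end Subgroup

section Pseudocentre

variable {G : Type*} [Group G]

theorem le_P_of_minimal {M : Subgroup G}
    (hM : Minimal (fun K : Subgroup G => K.Normal ∧ K ≠ ⊥) M) : M ≤ P G :=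
  le_iInf (le_normalClosure_centralizer_of_minimal hM)

theorem P_ne_bot_of_finite_normal {B : Subgroup G} [Finite B] (hB : B.Normal) (hB₁ : B ≠ ⊥) :
    P G ≠ ⊥ := by
  obtain ⟨M, hM⟩ := exists_minimal_normal_of_finite hB hB₁
  exact ne_bot_of_le_ne_bot hM.1.2 (le_P_of_minimal hM)

theorem pow_index_mem_P {N : Subgroup G} [N.Normal] {z : G}
    (hz : z ∈ N ⊓ centralizer (N : Set G)) : z ^ N.index ∈ P G := by
  refine mem_iInf.mpr fun g => pow_mem_normalClosure_centralizer hz ?_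
  exact (mem_centralizer_iff.mp (mem_inf.mp hz).2 _ (N.pow_index_mem g))

theorem exists_finite_normal_ne_bot_of_pow_index_eq_one [Nontrivial G] {N : Subgroup G}
    [N.Normal] [N.FiniteIndex] [Group.IsNilpotent N]
    (hexp : ∀ z ∈ N ⊓ centralizer (N : Set G), z ^ N.index = 1) :
    ∃ B : Subgroup G, B.Normal ∧ B ≠ ⊥ ∧ Finite B := by
  rcases N.bot_or_nontrivial with rfl | hN₁
  · have : Finite G := Finite.of_equiv _ QuotientGroup.quotientBot.toEquiv
    exact ⟨⊤, inferInstance, top_ne_bot, inferInstance⟩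
  obtain ⟨⟨c, hc⟩, hc₁⟩ := ne_bot_iff_exists_ne_one.mp (Group.IsNilpotent.center_ne_bot (G := N))
  have hcZ := coe_mem_inf_centralizer_of_mem_center hc
  have hcB : (c : G) ∈ normalClosure {(c : G)} := subset_normalClosure rfl
  have : (centralizer {(c : G)}).FiniteIndex :=
    finiteIndex_of_le (le_centralizer_singleton_of_mem_inf_centralizer hcZ)
  refine ⟨_, normalClosure_normal, fun h => hc₁ ?_,
    finite_normalClosure_singleton ?_ hcZ finite_conjugatesOf_of_finiteIndex⟩
  · simpa [h] using hcB
  · exact fun x hx => isOfFinOrder_iff_pow_eq_one.mpr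
      ⟨N.index, Nat.pos_of_ne_zero FiniteIndex.index_ne_zero, hexp x hx⟩

end Pseudocentre

/-- A non-trivial nilpotent-by-finite group has a non-trivial pseudocentre. -/
theorem pseudocentre_ne_bot_of_nilpotent_by_finite {G : Type*} [Group G] [Nontrivial G]
    (N : Subgroup G) (hN : N.Normal) (hnilp : Group.IsNilpotent N)
    (hfin : Finite (G ⧸ N)) :
    P G ≠ ⊥ := by
  have : N.FiniteIndex := finiteIndex_of_finite_quotient
  by_cases hexp : ∀ z ∈ N ⊓ centralizer (N : Set G), z ^ N.index = 1
  · obtain ⟨B, hB, hB₁, hBfin⟩ := exists_finite_normal_ne_bot_of_pow_index_eq_one hexp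
    exact P_ne_bot_of_finite_normal hB hB₁
  · push Not at hexp
    obtain ⟨z, hz, hz₁⟩ := hexp
    exact fun hP => hz₁ (mem_bot.mp (hP ▸ pow_index_mem_P hz))
end

section
/- The pseudocentre of SL(2,ℤ) coincides with its centre: P(SL(2,ℤ)) = Z(SL(2,ℤ)) = {±I}. Moreover, the pseudocentre of PSL(2,ℤ) = SL(2,ℤ)/Z(SL(2,ℤ)) is trivial: P(SL(2,ℤ) ⧸ center) = {1}. -/
lemma pell_step (n : ℤ) (hn : 1 ≤ n) (b d : ℤ) (hb : 0 < b)
    (heq : d^2 + n*b*d - b^2 = 1) :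
    ∃ d₀ : ℤ, 0 < d₀ ∧ d₀^2 + n*b*d₀ - b^2 = 1 ∧ n*d₀ < 2*b := by
  have hd0 : d ≠ 0 := by rintro rfl; nlinarith
  have hprod : d * (d + n*b) = 1 + b^2 := by linear_combination heq
  rcases lt_or_gt_of_ne hd0 with hdneg | hdpos
  · have h1 : d + n*b < 0 := by nlinarith
    refine ⟨-(d + n*b), by omega, by linear_combination heq, ?_⟩
    nlinarith [sq_nonneg (d + n*b)]
  · refine ⟨d, hdpos, heq, ?_⟩
    nlinarith

lemma pell_dvd (n : ℤ) (hn : 1 ≤ n) :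
    ∀ k : ℕ, ∀ b d : ℤ, b.natAbs ≤ k → d^2 + n*b*d - b^2 = 1 → n ∣ b := by
  intro k
  induction k with
  | zero =>
    intro b d hb _
    have : b = 0 := by omega
    simp [this]
  | succ k ih =>
    intro b d hb heq
    rcases eq_or_ne b 0 with rfl | hb0
    · simp
    obtain ⟨B, D, hB, hBabs, heqB, hdvd⟩ :
        ∃ B D : ℤ, 0 < B ∧ B.natAbs = b.natAbs ∧ D^2 + n*B*D - B^2 = 1 ∧ (n ∣ B → n ∣ b) := by
      rcases lt_or_gt_of_ne hb0 with hneg | hpos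
      · exact ⟨-b, -d, by omega, by omega, by linear_combination heq, fun h => (dvd_neg).mp h⟩
      · exact ⟨b, d, hpos, rfl, heq, fun h => h⟩
    obtain ⟨d₀, hd₀, heq₀, hlt⟩ := pell_step n hn B D hB heqB
    set b' := B - n * d₀ with hb'
    have heq' : (d₀*(1+n^2) - n*B)^2 + n*b'*(d₀*(1+n^2) - n*B) - b'^2 = 1 := by
      linear_combination (1 + n^2 - n^2) * heq₀
    have hlt' : b'.natAbs < B.natAbs := by
      have h1 : 0 < n * d₀ := by positivity
      omega
    have : n ∣ b' := ih b' _ (by omega) heq'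
    apply hdvd
    have hB' : B = b' + n * d₀ := by omega
    exact hB' ▸ dvd_add this ⟨d₀, rfl⟩

open Matrix Subgroup

abbrev SL2Z := Matrix.SpecialLinearGroup (Fin 2) ℤ

def Hel (n : ℕ) : SL2Z :=
  ⟨!![1+(n:ℤ)^2, (n:ℤ); (n:ℤ), 1], by simp [Matrix.det_fin_two_of]; ring⟩

def phi (n : ℕ) : SL2Z →* Matrix.SpecialLinearGroup (Fin 2) (ZMod n) :=
  Matrix.SpecialLinearGroup.map (Int.castRingHom (ZMod n))

def NN (n : ℕ) : Subgroup SL2Z :=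
  Subgroup.comap (phi n) (Subgroup.center _)

instance (n : ℕ) : (NN n).Normal := Subgroup.normal_comap _

lemma hel_comm (n : ℕ) (hn : 1 ≤ n) (x : SL2Z) (h : (Hel n) * x = x * (Hel n)) :
    x.1 1 0 = x.1 0 1 ∧ x.1 0 0 = (n:ℤ) * x.1 0 1 + x.1 1 1 := by
  have h' : (Hel n).1 * x.1 = x.1 * (Hel n).1 := congrArg Subtype.val h
  have e00 := congrFun (congrFun h' 0) 0
  have e01 := congrFun (congrFun h' 0) 1
  simp [Hel, Matrix.mul_apply, Fin.sum_univ_two] at e00 e01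
  have hn0 : (n:ℤ) ≠ 0 := by exact_mod_cast Nat.one_le_iff_ne_zero.mp hn
  have h1 : (n:ℤ) * x.1 1 0 = (n:ℤ) * x.1 0 1 := by linarith
  have h2 : (n:ℤ) * x.1 0 0 = (n:ℤ) * ((n:ℤ) * x.1 0 1 + x.1 1 1) := by ring_nf; ring_nf at e01; linarith
  exact ⟨mul_left_cancel₀ hn0 h1, mul_left_cancel₀ hn0 h2⟩

lemma centralizer_Hel_le (n : ℕ) (hn : 1 ≤ n) :
    Subgroup.centralizer {Hel n} ≤ NN n := by
  intro x hx
  rw [Subgroup.mem_centralizer_singleton_iff] at hx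
  obtain ⟨hbc, hah⟩ := hel_comm n hn x hx.symm
  set a := x.1 0 0 with ha
  set b := x.1 0 1 with hb
  set c := x.1 1 0 with hc
  set d := x.1 1 1 with hd
  have hdet : a * d - b * c = 1 := by
    have := x.2
    rw [Matrix.det_fin_two] at this
    exact this
  have heq : d^2 + (n:ℤ)*b*d - b^2 = 1 := by
    rw [hah, hbc] at hdet; linear_combination hdet
  have hdvd : (n:ℤ) ∣ b := pell_dvd n (by exact_mod_cast hn) b.natAbs b d le_rfl heq
  have hb0 : ((b : ℤ) : ZMod n) = 0 := (ZMod.intCast_zmod_eq_zero_iff_dvd b n).mpr hdvd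
  -- membership
  simp only [NN, Subgroup.mem_comap]
  rw [Matrix.SpecialLinearGroup.mem_center_iff]
  refine ⟨((d : ℤ) : ZMod n), ?_, ?_⟩
  · have h2 : ((d^2 + (n:ℤ)*b*d - b^2 : ℤ) : ZMod n) = 1 := by rw [heq]; norm_num
    push_cast at h2
    rw [hb0] at h2
    simpa [Fintype.card_fin, sq] using by linear_combination h2
  · ext i j
    rw [Matrix.scalar_apply]
    fin_cases i <;> fin_cases j <;>
      · simp only [phi, Matrix.SpecialLinearGroup.map_apply_coe, RingHom.mapMatrix_apply,
          Matrix.map_apply, Int.coe_castRingHom, Matrix.diagonal_apply]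
        simp [← ha, ← hb, ← hc, ← hd, hah, hbc, hb0]

lemma center_iff (g : SL2Z) :
    g ∈ Subgroup.center SL2Z ↔ (g : Matrix (Fin 2) (Fin 2) ℤ) = 1 ∨
      (g : Matrix (Fin 2) (Fin 2) ℤ) = -1 := by
  rw [Matrix.SpecialLinearGroup.mem_center_iff]
  constructor
  · rintro ⟨r, hr, hs⟩
    simp only [Fintype.card_fin] at hr
    have h1 : (r - 1) * (r + 1) = 0 := by linear_combination hr
    rcases mul_eq_zero.mp h1 with h | h
    · left; rw [← hs, Matrix.scalar_apply, show r = 1 by linarith]; simp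
    · right; rw [← hs, Matrix.scalar_apply, show r = -1 by linarith]
      ext i j; fin_cases i <;> fin_cases j <;>
        simp [Matrix.diagonal_apply, Matrix.neg_apply, Matrix.one_apply]
  · rintro (h | h)
    · exact ⟨1, by norm_num, by rw [h, Matrix.scalar_apply]; simp⟩
    · refine ⟨-1, by norm_num, ?_⟩
      rw [h, Matrix.scalar_apply]
      ext i j; fin_cases i <;> fin_cases j <;>
        simp [Matrix.diagonal_apply, Matrix.neg_apply, Matrix.one_apply]

lemma eq_pm_one (x : SL2Z) (h : ∀ n : ℕ, x ∈ NN (n+1)) :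
    (x : Matrix (Fin 2) (Fin 2) ℤ) = 1 ∨ (x : Matrix (Fin 2) (Fin 2) ℤ) = -1 := by
  set a := x.1 0 0 with ha
  set b := x.1 0 1 with hb
  set c := x.1 1 0 with hc
  set d := x.1 1 1 with hd
  set k := (a - d).natAbs + b.natAbs + c.natAbs with hk
  have hx := h k
  simp only [NN, Subgroup.mem_comap, Matrix.SpecialLinearGroup.mem_center_iff] at hx
  obtain ⟨r, hr, hs⟩ := hx
  have hcast : ∀ i j, ((x.1 i j : ℤ) : ZMod (k+1)) = Matrix.scalar (Fin 2) r i j := by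
    intro i j
    rw [hs]
    simp [phi, Matrix.SpecialLinearGroup.map_apply_coe]
  have hkk : ((k:ℤ)+1) ∣ b := by
    have := hcast 0 1
    rw [Matrix.scalar_apply, Matrix.diagonal_apply] at this
    norm_num at this
    have := (ZMod.intCast_zmod_eq_zero_iff_dvd b (k+1)).mp this
    exact_mod_cast this
  have hb0 : b = 0 := Int.eq_zero_of_abs_lt_dvd hkk (by rw [Int.abs_eq_natAbs]; omega)
  have hkk2 : ((k:ℤ)+1) ∣ c := by
    have := hcast 1 0
    rw [Matrix.scalar_apply, Matrix.diagonal_apply] at this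
    norm_num at this
    have := (ZMod.intCast_zmod_eq_zero_iff_dvd c (k+1)).mp this
    exact_mod_cast this
  have hc0 : c = 0 := Int.eq_zero_of_abs_lt_dvd hkk2 (by rw [Int.abs_eq_natAbs]; omega)
  have hkk3 : ((k:ℤ)+1) ∣ (a - d) := by
    have h00 := hcast 0 0
    have h11 := hcast 1 1
    rw [Matrix.scalar_apply, Matrix.diagonal_apply] at h00 h11
    norm_num at h00 h11
    have : ((a - d : ℤ) : ZMod (k+1)) = 0 := by push_cast; rw [h00, h11]; ring
    have := (ZMod.intCast_zmod_eq_zero_iff_dvd (a-d) (k+1)).mp this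
    exact_mod_cast this
  have had : a = d := by have := Int.eq_zero_of_abs_lt_dvd hkk3 (by rw [Int.abs_eq_natAbs]; omega); omega
  have hdet : a * d - b * c = 1 := by
    have := x.2; rw [Matrix.det_fin_two] at this; exact this
  rw [hb0, hc0, had] at hdet
  rcases mul_self_eq_one_iff.mp (by linarith : d * d = 1) with h1 | h1
  · left
    rw [Matrix.eta_fin_two x.1, ← ha, ← hb, ← hc, ← hd, hb0, hc0, had, h1, Matrix.one_fin_two]
  · right
    rw [Matrix.eta_fin_two x.1, ← ha, ← hb, ← hc, ← hd, hb0, hc0, had, h1]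
    ext i j
    fin_cases i <;> fin_cases j <;> simp [Matrix.neg_apply, Matrix.one_apply]

lemma center_le_NN (n : ℕ) : Subgroup.center SL2Z ≤ NN n := by
  intro z hz
  simp only [NN, Subgroup.mem_comap]
  rcases (center_iff z).mp hz with h | h
  · rw [Matrix.SpecialLinearGroup.mem_center_iff]
    refine ⟨1, by norm_num, ?_⟩
    ext i j
    rw [Matrix.scalar_apply]
    simp [phi, Matrix.SpecialLinearGroup.map_apply_coe, h, Matrix.diagonal_apply,
      Matrix.one_apply]
  · rw [Matrix.SpecialLinearGroup.mem_center_iff]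
    refine ⟨-1, by norm_num, ?_⟩
    ext i j
    rw [Matrix.scalar_apply]
    simp [phi, Matrix.SpecialLinearGroup.map_apply_coe, h, Matrix.diagonal_apply,
      Matrix.neg_apply, Matrix.one_apply]
    split <;> simp_all

lemma trace_Hel (n : ℕ) : Matrix.trace (Hel n).1 = 2 + (n:ℤ)^2 := by
  simp [Hel, Matrix.trace_fin_two]; ring

lemma centralizer_mk_le (n : ℕ) :
    Subgroup.centralizer
        {((Hel (n+1) : SL2Z) : SL2Z ⧸ Subgroup.center SL2Z)} ≤
      (NN (n+1)).map (QuotientGroup.mk' (Subgroup.center SL2Z)) := by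
  intro yb hyb
  obtain ⟨y, rfl⟩ := QuotientGroup.mk_surjective yb
  rw [Subgroup.mem_centralizer_singleton_iff] at hyb
  have hyb' : ((y * Hel (n+1) : SL2Z) : SL2Z ⧸ Subgroup.center SL2Z)
      = ((Hel (n+1) * y : SL2Z) : _) := by
    push_cast
    exact hyb
  rw [QuotientGroup.eq] at hyb'
  set z := (y * Hel (n+1))⁻¹ * (Hel (n+1) * y) with hzdef
  rcases (center_iff z).mp hyb' with h | h
  · -- z = 1 : y commutes with Hel
    have hz1 : z = 1 := Subtype.ext (by rw [h]; rfl)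
    have hcomm : y * Hel (n+1) = Hel (n+1) * y := by
      have := hzdef ▸ hz1
      rwa [inv_mul_eq_one] at this
    exact ⟨y, centralizer_Hel_le (n+1) (by omega)
      (Subgroup.mem_centralizer_singleton_iff.mpr hcomm), rfl⟩
  · -- contradiction via trace
    exfalso
    have hconj : y⁻¹ * Hel (n+1) * y = Hel (n+1) * z := by
      rw [hzdef]; group
    have hval := congrArg Subtype.val hconj
    simp only [Matrix.SpecialLinearGroup.coe_mul] at hval
    have hz : z.1 = -1 := h
    rw [hz, mul_neg, mul_one] at hval
    have hyy : (y.1 : Matrix (Fin 2) (Fin 2) ℤ) * (y⁻¹).1 = 1 := by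
      have h0 : y * y⁻¹ = 1 := mul_inv_cancel y
      calc (y.1 : Matrix (Fin 2) (Fin 2) ℤ) * (y⁻¹).1
          = ((y * y⁻¹ : SL2Z)).1 := (Matrix.SpecialLinearGroup.coe_mul _ _).symm
        _ = 1 := by rw [h0]; rfl
    have htr : Matrix.trace ((y⁻¹).1 * (Hel (n+1)).1 * y.1)
        = Matrix.trace (Hel (n+1)).1 := by
      rw [Matrix.trace_mul_comm, ← Matrix.mul_assoc, hyy, Matrix.one_mul]
    rw [hval] at htr
    rw [Matrix.trace_neg, trace_Hel] at htr
    nlinarith [sq_nonneg ((n:ℤ)+1), htr]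

/-- The pseudocentre of `SL(2,ℤ)` is its centre (which is `{±I}`), and the
pseudocentre of `PSL(2,ℤ)` is trivial. -/
theorem pseudocentre_SL2Z :
    P (Matrix.SpecialLinearGroup (Fin 2) ℤ) =
      Subgroup.center (Matrix.SpecialLinearGroup (Fin 2) ℤ) ∧
    (∀ g : Matrix.SpecialLinearGroup (Fin 2) ℤ,
      g ∈ Subgroup.center (Matrix.SpecialLinearGroup (Fin 2) ℤ) ↔
        (g : Matrix (Fin 2) (Fin 2) ℤ) = 1 ∨ (g : Matrix (Fin 2) (Fin 2) ℤ) = -1) ∧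
    P (Matrix.SpecialLinearGroup (Fin 2) ℤ ⧸
        Subgroup.center (Matrix.SpecialLinearGroup (Fin 2) ℤ)) = ⊥ := by
  refine ⟨?_, center_iff, ?_⟩
  · apply le_antisymm
    · intro x hx
      rw [center_iff]
      apply eq_pm_one
      intro n
      have hx' : x ∈ Subgroup.normalClosure
          ↑(Subgroup.centralizer {Hel (n+1)}) := by
        simp only [P, Subgroup.mem_iInf] at hx
        exact hx _
      exact Subgroup.normalClosure_le_normal (centralizer_Hel_le (n+1) (by omega)) hx'
    · apply le_iInf
      intro g
      refine le_trans ?_ Subgroup.le_normalClosure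
      intro z hz
      exact Subgroup.mem_centralizer_singleton_iff.mpr
        (Subgroup.mem_center_iff.mp hz g).symm
  · rw [eq_bot_iff]
    intro xb hxb
    obtain ⟨x, rfl⟩ := QuotientGroup.mk_surjective xb
    rw [Subgroup.mem_bot]
    have key : ∀ n : ℕ, x ∈ NN (n+1) := by
      intro n
      have h1 : ((x : SL2Z) : SL2Z ⧸ Subgroup.center SL2Z) ∈ Subgroup.normalClosure
          ↑(Subgroup.centralizer {((Hel (n+1) : SL2Z) : SL2Z ⧸ Subgroup.center SL2Z)}) := by
        simp only [P, Subgroup.mem_iInf] at hxb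
        exact hxb _
      have h3 : ((NN (n+1)).map (QuotientGroup.mk' (Subgroup.center SL2Z))).Normal :=
        Subgroup.Normal.map inferInstance _ (QuotientGroup.mk'_surjective _)
      have h4 := Subgroup.normalClosure_le_normal (centralizer_mk_le n) h1
      obtain ⟨y, hy, hyx⟩ := h4
      have hyx' : ((y : SL2Z) : SL2Z ⧸ Subgroup.center SL2Z) = ((x : SL2Z) : _) := hyx
      rw [QuotientGroup.eq] at hyx'
      have hz : y⁻¹ * x ∈ NN (n+1) := center_le_NN _ hyx'
      have := mul_mem hy hz
      simpa using this
    rcases eq_pm_one x key with h | h <;>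
    · rw [QuotientGroup.eq_one_iff, center_iff]
      tauto
end
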